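/- arXiv:math/9801064 — 3 statements merged into one kernel-verified Lean document; each statement's English description precedes it below -/
import Mathlib

section
/- Let α, β, γ be complex numbers satisfying 2α = βγ and 2β = α(αβ - γ). Then either β²γ² - 2γ² - 8 = 0, or α = β = 0. -/
/-! Eliminating `α` from the two relations shows that `β * (β²γ² - 2γ² - 8)` lies in the ideal
they generate. So either the quartic vanishes, or `β = 0` and then `2α = βγ` forces `α = 0`. -/

theorem mul_quartic_eq_zero_of_trace_relations {R : Type*} [CommRing R] {α β γ : R}
    (h1 : 2 * α = β * γ) (h2 : 2 * β = α * (α * β - γ)) :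
    β * (β ^ 2 * γ ^ 2 - 2 * γ ^ 2 - 8) = 0 := by
  linear_combination (2 * γ - β ^ 2 * γ - 2 * α * β) * h1 - 4 * h2

theorem trace_relations (α β γ : ℂ) (h1 : 2 * α = β * γ) (h2 : 2 * β = α * (α * β - γ)) :
    β ^ 2 * γ ^ 2 - 2 * γ ^ 2 - 8 = 0 ∨ (α = 0 ∧ β = 0) := by
  rcases mul_eq_zero.mp (mul_quartic_eq_zero_of_trace_relations h1 h2) with hβ | hquartic
  · have hα : α = 0 := by simpa [hβ] using h1
    exact Or.inr ⟨hα, hβ⟩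
  · exact Or.inl hquartic
end

section
/- Let α, β, γ, τ be complex numbers with α, β, γ nonzero, γ² ≠ 4, 2α = βγ, γ² = 2(α² - 2). Suppose a, b, c, d satisfy a = τ, b = (β/γ)τ, c = (2β(α² - 3)/γ²)τ, d = (2/γ)τ, and dτ - cb = 2γ - αβ. Then 4τ² = -γ⁴. -/
theorem tau_squared (α β γ τ a b c d : ℂ) (hα : α ≠ 0) (hβ : β ≠ 0) (hγ : γ ≠ 0)
    (hγ4 : γ ^ 2 ≠ 4) (h1 : 2 * α = β * γ) (h2 : γ ^ 2 = 2 * (α ^ 2 - 2))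
    (ha : a = τ) (hb : b = (β / γ) * τ) (hc : c = (2 * β * (α ^ 2 - 3) / γ ^ 2) * τ)
    (hd : d = (2 / γ) * τ) (hrel : d * τ - c * b = 2 * γ - α * β) :
    4 * τ ^ 2 = -γ ^ 4 := by
  have hb2 : b * γ = β * τ := by
    rw [hb]; field_simp
  have hc2 : c * γ ^ 2 = 2 * β * (α ^ 2 - 3) * τ := by
    rw [hc]; field_simp
  have hdt : d * τ * γ = 2 * τ ^ 2 := by
    rw [hd]; field_simp
  have hcb : c * b * γ ^ 3 = 2 * β ^ 2 * (α ^ 2 - 3) * τ ^ 2 := by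
    linear_combination (b * γ) * hc2 + (2 * β * (α ^ 2 - 3) * τ) * hb2
  have h7 : 2 * τ ^ 2 * γ ^ 2 - 2 * β ^ 2 * (α ^ 2 - 3) * τ ^ 2
      = 2 * γ ^ 4 - α * β * γ ^ 3 := by
    linear_combination γ ^ 3 * hrel - γ ^ 2 * hdt + hcb
  have h8 : 2 * τ ^ 2 * γ ^ 4 - 8 * α ^ 2 * (α ^ 2 - 3) * τ ^ 2
      = 2 * γ ^ 6 - 2 * α ^ 2 * γ ^ 4 := by
    linear_combination γ ^ 2 * h7 +
      (α * γ ^ 4 - 2 * (α ^ 2 - 3) * (β * γ + 2 * α) * τ ^ 2) * h1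
  have key : (γ ^ 2 - 4) * (4 * τ ^ 2 + γ ^ 4) = 0 := by
    linear_combination (-1 : ℂ) * h8 +
      (4 * τ ^ 2 * α ^ 2 + 2 * τ ^ 2 * γ ^ 2 - 4 * τ ^ 2 - γ ^ 4) * h2
  have hγ4' : γ ^ 2 - 4 ≠ 0 := sub_ne_zero.mpr hγ4
  have := (mul_eq_zero.mp key).resolve_left hγ4'
  linear_combination this
end

section
/- Let α, β, γ, τ be complex numbers with γ ≠ 0, 2α = βγ, γ² = 2(α² - 2), 2τ = -iγ², and let trLT = αβ·(2/γ)τ - α·(β/γ)τ - β·(2β(α²-3)/γ²)τ + τ. Then trLT = -4/τ. -/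
theorem trace_LT (α β γ τ : ℂ) (hγ : γ ≠ 0) (h1 : 2 * α = β * γ)
    (h2 : γ ^ 2 = 2 * (α ^ 2 - 2)) (h3 : 2 * τ = -Complex.I * γ ^ 2)
    (trLT : ℂ)
    (hLT : trLT = α * β * ((2 / γ) * τ) - α * ((β / γ) * τ) -
      β * ((2 * β * (α ^ 2 - 3) / γ ^ 2) * τ) + τ) :
    trLT = -4 / τ := by
  have hγ2 : γ ^ 2 ≠ 0 := pow_ne_zero _ hγ
  have hτ : τ ≠ 0 := by
    intro h
    apply hγ2
    have hz : -Complex.I * γ ^ 2 = 0 := by rw [← h3, h]; ring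
    field_simp at hz
    simpa [Complex.I_ne_zero] using hz
  have key : trLT * γ ^ 4 = 16 * τ := by
    rw [hLT]
    have hi : γ * γ⁻¹ = 1 := mul_inv_cancel₀ hγ
    linear_combination
      (α*β*τ*γ^3 - 2*β^2*(α^2-3)*τ*γ^2*(γ*γ⁻¹+1)) * hi +
      τ*(-α*γ^2 + 2*(α^2-3)*(β*γ+2*α)) * h1 +
      τ*(γ^2+4*α^2-4) * h2
  have hγ4 : γ ^ 4 = -4 * τ ^ 2 := by
    linear_combination (2*τ - Complex.I*γ^2) * h3 + γ^4 * Complex.I_sq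
  have h5 : trLT * (-4 * τ ^ 2) = 16 * τ := by rw [← hγ4]; exact key
  have h6 : trLT * τ = -4 := by
    have h7 : (trLT * τ) * (-4 * τ) = (-4) * (-4 * τ) := by linear_combination h5
    exact mul_right_cancel₀ (by simp [hτ]) h7
  field_simp
  linear_combination h6
end
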